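/- arXiv:1910.14371 — 2 statements merged into one kernel-verified Lean document; each statement's English description precedes it below -/
import Mathlib

section
/- Let c > 0, let ψ ∈ W^{2,∞}(𝕋) with ψ(y) ≥ 0 for all y, and let u be a bounded classical solution of the temperature problem for (c,ψ). Then 0 ≤ u(x,y) ≤ e^{c·x} for all (x,y) in the closure of Ω_ψ. -/
/-!
Both bounds follow from one minimum principle on the periodic half-plane `x ≤ ψ(y)`: a
`y`-periodic `w` with `c ∂ₓw − Δw ≥ 0` inside, `∂w/∂(1, −ψ') ≥ 0` on the boundary and
`liminf w ≥ 0` as `x → −∞` is nonnegative. It applies to `u`, whose normal derivative is `c`, and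
to `e^{cx} − u`, which solves the equation because `e^{cx}` does, and whose normal derivative
`c e^{cψ} − c` is nonnegative because `ψ ≥ 0`.

For the principle, if `w` were negative somewhere, `g = w + ε e^{lx}` with `0 < l < c` and small
`ε` would be a strict supersolution with strictly positive boundary derivative that is still
negative somewhere. By periodicity and the decay at `−∞` it attains its minimum. An interior
minimum contradicts the equation (zero gradient, nonnegative Laplacian), and at a boundary minimum
the derivative in the inward direction `(−1, ψ')` would be negative.
-/

open MeasureTheory Set Filter
open scoped NNReal

noncomputable section

/-- The open fresh region `Ω_ψ = {(x,y) : x < ψ(y)}`.  Functions on the torus `𝕋 = ℝ/ℤ`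
are identified with 1-periodic functions on `ℝ`, so `Ω_ψ ⊆ ℝ × ℝ`. -/
def Omega (ψ : ℝ → ℝ) : Set (ℝ × ℝ) := {p | p.1 < ψ p.2}

/-- The closure of `Ω_ψ`, i.e. `{(x,y) : x ≤ ψ(y)}`. -/
def OmegaCl (ψ : ℝ → ℝ) : Set (ℝ × ℝ) := {p | p.1 ≤ ψ p.2}

/-- Partial derivative in the `x`-direction. -/
def pdx (u : ℝ × ℝ → ℝ) (p : ℝ × ℝ) : ℝ := fderiv ℝ u p (1, 0)

/-- Partial derivative in the `y`-direction. -/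
def pdy (u : ℝ × ℝ → ℝ) (p : ℝ × ℝ) : ℝ := fderiv ℝ u p (0, 1)

/-- Laplacian. -/
def lap (u : ℝ × ℝ → ℝ) (p : ℝ × ℝ) : ℝ := pdx (pdx u) p + pdy (pdy u) p

/-- `ψ ∈ W^{2,∞}(𝕋)`: a 1-periodic `C¹` function with Lipschitz derivative;
its a.e. second derivative is `deriv (deriv ψ)`. -/
structure W2infPer (ψ : ℝ → ℝ) : Prop where
  periodic : Function.Periodic ψ 1
  contDiff : ContDiff ℝ 1 ψ
  lipDeriv : ∃ L : ℝ≥0, LipschitzWith L (deriv ψ)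

/-- A classical solution `u` of the temperature problem for `(c, ψ)`:
1-periodic in `y`, continuous on the closure of `Ω_ψ`, `C²` inside, `C¹` up to the
boundary, with finite energy `∫_{Ω_ψ} (u² + |∇u|²) < ∞` (one period in `y`),
satisfying `c uₓ - Δu = 0` in `Ω_ψ`, the Neumann condition
`∂u/∂ν = c/√(1+ψ'²)` on `{x = ψ(y)}` (where `ν = (1, -ψ')/√(1+ψ'²)`),
and `u → 0` uniformly in `y` as `x → -∞`. -/
structure IsTempSol (c : ℝ) (ψ : ℝ → ℝ) (u : ℝ × ℝ → ℝ) : Prop where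
  periodic : ∀ x y : ℝ, u (x, y + 1) = u (x, y)
  contOn : ContinuousOn u (OmegaCl ψ)
  c2 : ContDiffOn ℝ 2 u (Omega ψ)
  c1 : ContDiffOn ℝ 1 u (OmegaCl ψ)
  pde : ∀ p ∈ Omega ψ, c * pdx u p - lap u p = 0
  bc : ∀ y : ℝ,
    fderivWithin ℝ u (OmegaCl ψ) (ψ y, y) (1, -deriv ψ y) / Real.sqrt (1 + deriv ψ y ^ 2)
      = c / Real.sqrt (1 + deriv ψ y ^ 2)
  energy : IntegrableOn (fun p => u p ^ 2 + ‖fderiv ℝ u p‖ ^ 2)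
      (Omega ψ ∩ {p : ℝ × ℝ | p.2 ∈ Ico (0 : ℝ) 1})
  decay : ∀ ε > 0, ∃ X : ℝ, ∀ p ∈ OmegaCl ψ, p.1 ≤ X → |u p| ≤ ε

open scoped Topology

theorem IsLocalMin.deriv_deriv_nonneg {f : ℝ → ℝ} {a : ℝ} (h : IsLocalMin f a)
    (hc : ContinuousAt f a) : 0 ≤ deriv (deriv f) a := by
  by_contra! hneg
  have hconst : f =ᶠ[𝓝 a] fun _ => f a :=
    (h.and (isLocalMax_of_deriv_deriv_neg hneg h.deriv_eq_zero hc)).mono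
      fun x hx => le_antisymm hx.2 hx.1
  have : deriv (deriv f) a = 0 := by
    rw [hconst.deriv.deriv_eq]
    simp
  exact hneg.ne this

theorem IsLocalMin.fderiv_fderiv_apply_nonneg {E : Type*} [NormedAddCommGroup E]
    [NormedSpace ℝ E] {g : E → ℝ} {q : E} (h : IsLocalMin g q) (hg : ContDiffAt ℝ 2 g q)
    (v : E) : 0 ≤ fderiv ℝ (fun r => fderiv ℝ g r v) q v := by
  set γ : ℝ → E := fun t => q + t • v with hγ
  have hγd : ∀ t, HasDerivAt γ v t := fun t => by
    simpa [hγ] using ((hasDerivAt_id t).smul_const v).const_add q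
  have hγ0 : γ 0 = q := by simp [hγ]
  have hγq : Tendsto γ (𝓝 0) (𝓝 q) := hγ0 ▸ (hγd 0).continuousAt.tendsto
  have hderiv : deriv (g ∘ γ) =ᶠ[𝓝 0] fun t => fderiv ℝ g (γ t) v := by
    filter_upwards [hγq.eventually (hg.eventually (by simp))] with t ht
    exact ((ht.differentiableAt two_ne_zero).hasFDerivAt.comp_hasDerivAt t (hγd t)).deriv
  have hsecond : HasDerivAt (fun t => fderiv ℝ g (γ t) v)
      (fderiv ℝ (fun r => fderiv ℝ g r v) q v) 0 := by
    have hd : DifferentiableAt ℝ (fun r => fderiv ℝ g r v) q :=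
      ((hg.fderiv_right (m := 1) le_rfl).differentiableAt one_ne_zero).clm_apply
        (differentiableAt_const v)
    exact hd.hasFDerivAt.comp_hasDerivAt_of_eq 0 (hγd 0) hγ0.symm
  have hmin : IsLocalMin (g ∘ γ) 0 := by
    simpa [IsLocalMin, IsMinFilter, hγ0] using hγq.eventually h
  have hcont : ContinuousAt (g ∘ γ) 0 :=
    ContinuousAt.comp_of_eq hg.continuousAt (hγd 0).continuousAt hγ0
  simpa [hderiv.deriv_eq, hsecond.deriv] using hmin.deriv_deriv_nonneg hcont

theorem IsLocalMin.lap_nonneg {g : ℝ × ℝ → ℝ} {q : ℝ × ℝ} (h : IsLocalMin g q)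
    (hg : ContDiffAt ℝ 2 g q) : 0 ≤ lap g q :=
  add_nonneg (h.fderiv_fderiv_apply_nonneg hg _) (h.fderiv_fderiv_apply_nonneg hg _)

theorem mem_posTangentConeAt_setOf_nonneg {E : Type*} [NormedAddCommGroup E]
    [NormedSpace ℝ E] {F : E → ℝ} {F' : E →L[ℝ] ℝ} {a v : E} (hF : HasFDerivAt F F' a)
    (ha : 0 ≤ F a) (hv : 0 < F' v) : v ∈ posTangentConeAt {x | 0 ≤ F x} a := by
  have hline : HasDerivAt (fun t : ℝ => F (a + t • v)) (F' v) 0 :=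
    hF.comp_hasDerivAt_of_eq 0 (by simpa using ((hasDerivAt_id (0 : ℝ)).smul_const v).const_add a)
      (by simp)
  refine mem_posTangentConeAt_of_frequently_mem (Eventually.frequently ?_)
  filter_upwards [hline.tendsto_slope_zero_right.eventually (eventually_gt_nhds hv),
    self_mem_nhdsWithin] with t ht (htpos : 0 < t)
  simp only [zero_add, zero_smul, add_zero, smul_eq_mul] at ht
  have := (mul_pos_iff_of_pos_left (inv_pos.2 htpos)).1 ht
  show 0 ≤ F (a + t • v)
  linarith

theorem hasFDerivAt_exp_mul_fst (l : ℝ) (p : ℝ × ℝ) :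
    HasFDerivAt (fun q : ℝ × ℝ => Real.exp (l * q.1))
      ((l * Real.exp (l * p.1)) • ContinuousLinearMap.fst ℝ ℝ ℝ) p := by
  simpa [smul_smul, mul_comm] using
    ((hasFDerivAt_fst (p := p)).const_mul l).exp

section LinearCombinationWithExp

variable {w : ℝ × ℝ → ℝ} {p : ℝ × ℝ} (a s l : ℝ)

theorem hasFDerivAt_mul_add_exp (hw : DifferentiableAt ℝ w p) :
    HasFDerivAt (fun q => a * w q + s * Real.exp (l * q.1))
      (a • fderiv ℝ w p + (s * (l * Real.exp (l * p.1))) • ContinuousLinearMap.fst ℝ ℝ ℝ) p := by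
  have := (hw.hasFDerivAt.const_mul a).add ((hasFDerivAt_exp_mul_fst l p).const_mul s)
  rwa [smul_smul] at this

theorem pdx_mul_add_exp (hw : DifferentiableAt ℝ w p) :
    pdx (fun q => a * w q + s * Real.exp (l * q.1)) p
      = a * pdx w p + s * (l * Real.exp (l * p.1)) := by
  simp [pdx, (hasFDerivAt_mul_add_exp a s l hw).fderiv]

theorem pdy_mul_add_exp (hw : DifferentiableAt ℝ w p) :
    pdy (fun q => a * w q + s * Real.exp (l * q.1)) p = a * pdy w p := by
  simp [pdy, (hasFDerivAt_mul_add_exp a s l hw).fderiv]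

theorem lap_mul_add_exp (hw : ContDiffAt ℝ 2 w p) :
    lap (fun q => a * w q + s * Real.exp (l * q.1)) p
      = a * lap w p + s * (l ^ 2 * Real.exp (l * p.1)) := by
  have hw' : ∀ᶠ r in 𝓝 p, DifferentiableAt ℝ w r :=
    (hw.eventually (by simp)).mono fun r hr => hr.differentiableAt two_ne_zero
  have hDw : DifferentiableAt ℝ (fderiv ℝ w) p :=
    (hw.fderiv_right (m := 1) le_rfl).differentiableAt one_ne_zero
  have hx : pdx (fun q => a * w q + s * Real.exp (l * q.1))
      =ᶠ[𝓝 p] fun r => a * pdx w r + (s * l) * Real.exp (l * r.1) :=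
    hw'.mono fun r hr => by rw [pdx_mul_add_exp a s l hr]; ring
  have hy : pdy (fun q => a * w q + s * Real.exp (l * q.1))
      =ᶠ[𝓝 p] fun r => a * pdy w r + 0 * Real.exp (l * r.1) :=
    hw'.mono fun r hr => by rw [pdy_mul_add_exp a s l hr]; ring
  have hpdx : DifferentiableAt ℝ (pdx w) p := hDw.clm_apply (differentiableAt_const _)
  have hpdy : DifferentiableAt ℝ (pdy w) p := hDw.clm_apply (differentiableAt_const _)
  have hxx : pdx (pdx (fun q => a * w q + s * Real.exp (l * q.1))) p
      = a * pdx (pdx w) p + s * l * (l * Real.exp (l * p.1)) := by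
    rw [← pdx_mul_add_exp a (s * l) l hpdx, pdx, pdx, hx.fderiv_eq]
  have hyy : pdy (pdy (fun q => a * w q + s * Real.exp (l * q.1))) p = a * pdy (pdy w) p := by
    rw [← pdy_mul_add_exp a 0 l hpdy, pdy, pdy, hy.fderiv_eq]
  rw [lap, lap, hxx, hyy]
  ring

theorem pdx_sub_lap_mul_add_exp (c : ℝ) (hw : ContDiffAt ℝ 2 w p) :
    c * pdx (fun q => a * w q + s * Real.exp (l * q.1)) p
        - lap (fun q => a * w q + s * Real.exp (l * q.1)) p
      = a * (c * pdx w p - lap w p) + s * (l * (c - l)) * Real.exp (l * p.1) := by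
  rw [pdx_mul_add_exp a s l (hw.differentiableAt two_ne_zero), lap_mul_add_exp a s l hw]
  ring

end LinearCombinationWithExp

section Domain

variable {ψ : ℝ → ℝ}

theorem isOpen_Omega (hψ : Continuous ψ) : IsOpen (Omega ψ) :=
  isOpen_lt continuous_fst (hψ.comp continuous_snd)

theorem isClosed_OmegaCl (hψ : Continuous ψ) : IsClosed (OmegaCl ψ) :=
  isClosed_le continuous_fst (hψ.comp continuous_snd)

theorem OmegaCl_mem_nhds (hψ : Continuous ψ) {p : ℝ × ℝ} (hp : p ∈ Omega ψ) :
    OmegaCl ψ ∈ 𝓝 p :=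
  mem_of_superset ((isOpen_Omega hψ).mem_nhds hp) fun q (hq : q.1 < ψ q.2) => hq.le

theorem inward_mem_posTangentConeAt_OmegaCl {y : ℝ} (hψ : DifferentiableAt ℝ ψ y) :
    ((-1 : ℝ), deriv ψ y) ∈ posTangentConeAt (OmegaCl ψ) (ψ y, y) := by
  have hF : HasFDerivAt (fun p : ℝ × ℝ => ψ p.2 - p.1)
      (deriv ψ y • ContinuousLinearMap.snd ℝ ℝ ℝ - ContinuousLinearMap.fst ℝ ℝ ℝ) (ψ y, y) :=
    (hψ.hasDerivAt.comp_hasFDerivAt (ψ y, y) hasFDerivAt_snd).sub hasFDerivAt_fst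
  have hset : OmegaCl ψ = {p | 0 ≤ ψ p.2 - p.1} := by ext; simp [OmegaCl]
  rw [hset]
  exact mem_posTangentConeAt_setOf_nonneg hF (by simp) (by simp; nlinarith)

theorem exists_isMinOn_OmegaCl_inter (hψ : Continuous ψ) (hψper : Function.Periodic ψ 1)
    {g : ℝ × ℝ → ℝ} (hgper : ∀ x y, g (x, y + 1) = g (x, y)) (hg : ContinuousOn g (OmegaCl ψ))
    {X : ℝ} (hne : (OmegaCl ψ ∩ {p | X ≤ p.1}).Nonempty) :
    ∃ q ∈ OmegaCl ψ ∩ {p | X ≤ p.1}, IsMinOn g (OmegaCl ψ ∩ {p | X ≤ p.1}) q := by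
  set S := OmegaCl ψ ∩ {p | X ≤ p.1}
  set K := S ∩ {p | p.2 ∈ Icc (0 : ℝ) 1}
  have hfract : ∀ p ∈ S, (p.1, Int.fract p.2) ∈ K ∧ g (p.1, Int.fract p.2) = g p := by
    intro p hp
    have hψf : ψ (Int.fract p.2) = ψ p.2 := by
      rw [Int.fract, ← mul_one (⌊p.2⌋ : ℝ)]
      exact hψper.sub_int_mul_eq _
    have hgf : g (p.1, Int.fract p.2) = g p := by
      rw [Int.fract, ← mul_one (⌊p.2⌋ : ℝ)]
      exact (show Function.Periodic (fun y => g (p.1, y)) 1 from hgper p.1).sub_int_mul_eq _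
    refine ⟨⟨⟨?_, hp.2⟩, Int.fract_nonneg _, (Int.fract_lt_one _).le⟩, hgf⟩
    show p.1 ≤ ψ (Int.fract p.2)
    rw [hψf]
    exact hp.1
  obtain ⟨B, hB⟩ := (isCompact_Icc.image_of_continuousOn hψ.continuousOn).bddAbove
  have hK : IsCompact K := by
    refine isCompact_Icc (a := ((X, 0) : ℝ × ℝ)) (b := (B, 1)) |>.of_isClosed_subset ?_ ?_
    · exact ((isClosed_OmegaCl hψ).inter (isClosed_le continuous_const continuous_fst)).inter
        (isClosed_Icc.preimage continuous_snd)
    · rintro p ⟨⟨hp1, hp2⟩, hp3⟩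
      exact ⟨⟨hp2, hp3.1⟩, hp1.trans (hB ⟨p.2, hp3, rfl⟩), hp3.2⟩
  obtain ⟨p₀, hp₀⟩ := hne
  obtain ⟨q, hqK, hqmin⟩ :=
    hK.exists_isMinOn ⟨_, (hfract p₀ hp₀).1⟩ (hg.mono fun p hp => hp.1.1)
  refine ⟨q, hqK.1, fun p hp => ?_⟩
  obtain ⟨hpK, hgp⟩ := hfract p hp
  exact (hqmin hpK).trans_eq hgp

end Domain

section MaximumPrinciple

variable {c : ℝ} {ψ : ℝ → ℝ}

theorem not_isLocalMinOn_OmegaCl (hψ : Differentiable ℝ ψ) {g : ℝ × ℝ → ℝ}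
    (hg : ContDiffOn ℝ 2 g (Omega ψ)) (hpde : ∀ p ∈ Omega ψ, 0 < c * pdx g p - lap g p)
    (hbc : ∀ y, ∃ L : ℝ × ℝ →L[ℝ] ℝ,
      HasFDerivWithinAt g L (OmegaCl ψ) (ψ y, y) ∧ 0 < L (1, -deriv ψ y))
    {q : ℝ × ℝ} (hq : q ∈ OmegaCl ψ) : ¬IsLocalMinOn g (OmegaCl ψ) q := by
  intro hmin
  rcases (show q.1 ≤ ψ q.2 from hq).lt_or_eq with hint | hbd
  · have hloc : IsLocalMin g q := hmin.isLocalMin (OmegaCl_mem_nhds hψ.continuous hint)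
    have hgrad : pdx g q = 0 := by rw [pdx, hloc.fderiv_eq_zero]; rfl
    have hlap := hloc.lap_nonneg (hg.contDiffAt ((isOpen_Omega hψ.continuous).mem_nhds hint))
    have := hpde q hint
    rw [hgrad, mul_zero] at this
    linarith
  · obtain ⟨L, hL, hLpos⟩ := hbc q.2
    have hq' : q = (ψ q.2, q.2) := Prod.ext hbd rfl
    rw [hq'] at hmin
    have hinward := hmin.hasFDerivWithinAt_nonneg hL
      (inward_mem_posTangentConeAt_OmegaCl (hψ q.2))
    have hneg : ((-1 : ℝ), deriv ψ q.2) = -((1 : ℝ), -deriv ψ q.2) := by simp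
    rw [hneg, map_neg] at hinward
    linarith

theorem nonneg_of_supersolution (hc : 0 < c) (hψ : Differentiable ℝ ψ)
    (hψper : Function.Periodic ψ 1) {w : ℝ × ℝ → ℝ} (hwper : ∀ x y, w (x, y + 1) = w (x, y))
    (hwcont : ContinuousOn w (OmegaCl ψ)) (hw : ContDiffOn ℝ 2 w (Omega ψ))
    (hpde : ∀ p ∈ Omega ψ, 0 ≤ c * pdx w p - lap w p)
    (hbc : ∀ y, ∃ L : ℝ × ℝ →L[ℝ] ℝ,
      HasFDerivWithinAt w L (OmegaCl ψ) (ψ y, y) ∧ 0 ≤ L (1, -deriv ψ y))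
    (hdecay : ∀ ε > 0, ∃ X, ∀ p ∈ OmegaCl ψ, p.1 ≤ X → -ε ≤ w p) :
    ∀ p ∈ OmegaCl ψ, 0 ≤ w p := by
  intro p₀ hp₀
  by_contra! hneg
  set l := c / 2
  have hl : 0 < l := by positivity
  have hlc : l < c := half_lt_self hc
  set ε := -w p₀ / (2 * Real.exp (l * p₀.1))
  have hε : 0 < ε := div_pos (by linarith) (by positivity)
  set g : ℝ × ℝ → ℝ := fun q => 1 * w q + ε * Real.exp (l * q.1)
  have hgp₀ : g p₀ = w p₀ / 2 := by
    simp only [g, ε]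
    field_simp
    ring
  obtain ⟨X, hX⟩ := hdecay (-w p₀ / 4) (by linarith)
  have hgcont : ContinuousOn g (OmegaCl ψ) :=
    (continuousOn_const.mul hwcont).add (by fun_prop)
  obtain ⟨q, ⟨hq, -⟩, hqmin⟩ := exists_isMinOn_OmegaCl_inter (X := min X p₀.1) hψ.continuous
    hψper (g := g) (fun x y => by simp only [g, hwper]) hgcont
    ⟨p₀, hp₀, show min X p₀.1 ≤ p₀.1 from min_le_right _ _⟩
  have hqX : X < q.1 := by
    by_contra! h
    have hwq := hX q hq h
    have hgq : g q ≤ g p₀ := hqmin ⟨hp₀, show min X p₀.1 ≤ p₀.1 from min_le_right _ _⟩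
    have : 0 < ε * Real.exp (l * q.1) := by positivity
    rw [hgp₀] at hgq
    simp only [g] at hgq
    linarith
  have hT : {p : ℝ × ℝ | min X p₀.1 ≤ p.1} ∈ 𝓝[OmegaCl ψ] q :=
    mem_nhdsWithin_of_mem_nhds <|
      continuous_fst.continuousAt.eventually (eventually_ge_nhds ((min_le_left _ _).trans_lt hqX))
  have hloc : IsLocalMinOn g (OmegaCl ψ) q := by
    have := hqmin.localize
    rwa [IsLocalMinOn, nhdsWithin_inter_of_mem' hT] at this
  refine not_isLocalMinOn_OmegaCl (c := c) hψ ?_ (fun p hp => ?_) (fun y => ?_) hq hloc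
  · exact (contDiffOn_const.mul hw).add (by fun_prop : ContDiff ℝ 2 _).contDiffOn
  · rw [pdx_sub_lap_mul_add_exp 1 ε l c
      (hw.contDiffAt ((isOpen_Omega hψ.continuous).mem_nhds hp))]
    have : 0 < ε * (l * (c - l)) * Real.exp (l * p.1) :=
      mul_pos (mul_pos hε (mul_pos hl (by linarith))) (Real.exp_pos _)
    linarith [hpde p hp]
  · obtain ⟨L, hL, hL0⟩ := hbc y
    refine ⟨_, (hL.const_mul 1).add
      ((hasFDerivAt_exp_mul_fst l _).hasFDerivWithinAt.const_mul ε), ?_⟩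
    have : 0 < ε * (l * Real.exp (l * ψ y)) := by positivity
    simp
    linarith

end MaximumPrinciple

section TemperatureProblem

variable {c : ℝ} {ψ : ℝ → ℝ} {u : ℝ × ℝ → ℝ}

theorem IsTempSol.fderivWithin_normal (hu : IsTempSol c ψ u) (y : ℝ) :
    fderivWithin ℝ u (OmegaCl ψ) (ψ y, y) (1, -deriv ψ y) = c :=
  (div_left_inj' (by positivity)).1 (hu.bc y)

theorem IsTempSol.hasFDerivWithinAt_boundary (hu : IsTempSol c ψ u) (y : ℝ) :
    HasFDerivWithinAt u (fderivWithin ℝ u (OmegaCl ψ) (ψ y, y)) (OmegaCl ψ) (ψ y, y) :=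
  (hu.c1.differentiableOn one_ne_zero _ (le_refl (ψ y))).hasFDerivWithinAt

theorem IsTempSol.nonneg (hc : 0 < c) (hψ : W2infPer ψ) (hu : IsTempSol c ψ u) :
    ∀ p ∈ OmegaCl ψ, 0 ≤ u p :=
  nonneg_of_supersolution hc (hψ.contDiff.differentiable one_ne_zero) hψ.periodic hu.periodic
    hu.contOn hu.c2 (fun p hp => (hu.pde p hp).ge)
    (fun y => ⟨_, hu.hasFDerivWithinAt_boundary y, (hu.fderivWithin_normal y).symm ▸ hc.le⟩)
    (fun ε hε => (hu.decay ε hε).imp fun _ hX p hp hpX => neg_le_of_abs_le (hX p hp hpX))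

theorem IsTempSol.le_exp (hc : 0 < c) (hψ : W2infPer ψ) (hψ0 : ∀ y, 0 ≤ ψ y)
    (hu : IsTempSol c ψ u) : ∀ p ∈ OmegaCl ψ, u p ≤ Real.exp (c * p.1) := by
  have hψd : Differentiable ℝ ψ := hψ.contDiff.differentiable one_ne_zero
  suffices h : ∀ p ∈ OmegaCl ψ, 0 ≤ -1 * u p + 1 * Real.exp (c * p.1) from
    fun p hp => by linarith [h p hp]
  refine nonneg_of_supersolution hc hψd hψ.periodic (fun x y => by simp only [hu.periodic])
    ((continuousOn_const.mul hu.contOn).add (by fun_prop))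
    ((contDiffOn_const.mul hu.c2).add (by fun_prop : ContDiff ℝ 2 _).contDiffOn)
    (fun p hp => ?_) (fun y => ?_) (fun ε hε => ?_)
  · rw [pdx_sub_lap_mul_add_exp _ _ _ _
      (hu.c2.contDiffAt ((isOpen_Omega hψd.continuous).mem_nhds hp)), hu.pde p hp]
    simp
  · refine ⟨_, ((hu.hasFDerivWithinAt_boundary y).const_mul (-1)).add
      ((hasFDerivAt_exp_mul_fst c _).hasFDerivWithinAt.const_mul 1), ?_⟩
    have : 1 ≤ Real.exp (c * ψ y) := Real.one_le_exp (mul_nonneg hc.le (hψ0 y))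
    simp [hu.fderivWithin_normal y]
    nlinarith
  · refine (hu.decay ε hε).imp fun _ hX p hp hpX => ?_
    have := le_of_abs_le (hX p hp hpX)
    have := Real.exp_pos (c * p.1)
    linarith

end TemperatureProblem

theorem temperature_exponential_bound_general
    (c : ℝ) (ψ : ℝ → ℝ) (u : ℝ × ℝ → ℝ)
    (hc : 0 < c) (hψ : W2infPer ψ) (hψ0 : ∀ y : ℝ, 0 ≤ ψ y)
    (hu : IsTempSol c ψ u) :
    ∀ p ∈ OmegaCl ψ, 0 ≤ u p ∧ u p ≤ Real.exp (c * p.1) :=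
  fun p hp => ⟨hu.nonneg hc hψ p hp, hu.le_exp hc hψ hψ0 p hp⟩

/-- If `c > 0`, `ψ ∈ W^{2,∞}(𝕋)` with `ψ ≥ 0`, and `u` is a bounded classical solution
of the temperature problem for `(c,ψ)`, then `0 ≤ u(x,y) ≤ e^{cx}` on the closure of
`Ω_ψ`. -/
theorem temperature_exponential_bound
    (c : ℝ) (ψ : ℝ → ℝ) (u : ℝ × ℝ → ℝ)
    (hc : 0 < c) (hψ : W2infPer ψ) (hψ0 : ∀ y : ℝ, 0 ≤ ψ y)
    (hu : IsTempSol c ψ u)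
    (hbdd : ∃ M : ℝ, ∀ p ∈ OmegaCl ψ, |u p| ≤ M) :
    ∀ p ∈ OmegaCl ψ, 0 ≤ u p ∧ u p ≤ Real.exp (c * p.1) :=
  temperature_exponential_bound_general c ψ u hc hψ hψ0 hu
end
end

section
/- Let G : ℝ → ℝ be continuous. For each n ∈ ℕ let ψₙ : 𝕋 → ℝ be C¹ with Lipschitz derivative, satisfying |ψₙ''(y)| ≤ G(ψₙ'(y)) for almost every y ∈ 𝕋. Let ȳ ∈ 𝕋 and let (wₙ)ₙ, (w̃ₙ)ₙ be sequences in 𝕋 with wₙ → ȳ, w̃ₙ → ȳ, ψₙ(wₙ) → 0 and ψₙ'(w̃ₙ) → 0 as n → ∞. Then there exist ε₀ > 0, a constant C ≥ 0 and N ∈ ℕ such that for all n ≥ N one has |ψₙ(y)| ≤ C and |ψₙ'(y)| ≤ C for all y ∈ B(ȳ, ε₀) and |ψₙ''(y)| ≤ C for almost every y ∈ B(ȳ, ε₀); moreover some subsequence of (ψₙ)ₙ converges uniformly on B(ȳ, ε₀) to a function ψ̄ which is C¹ with Lipschitz derivative on B(ȳ, ε₀). -/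
open Filter Set MeasureTheory Metric
open scoped NNReal Interval Topology

/-!
Let `M` bound `G` on `[-1, 1]` and `δ = 1 / (4 (M + 1))`. Once `w̃ₙ` is `δ`-close to `ȳ` and
`|ψₙ'(w̃ₙ)| < 1/2`, we get `|ψₙ'| < 1` within `2δ` of `w̃ₙ`: up to the first point where `|ψₙ'|`
reaches `1` we have `|ψₙ''| ≤ G(ψₙ') ≤ M`, so there `|ψₙ'| ≤ 1/2 + 2Mδ`, which is less than 1, a
contradiction. Hence `|ψₙ''| ≤ M` a.e. on `B(ȳ, δ)`, and `ψₙ'`, being Lipschitz and therefore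
absolutely continuous, is `M`-Lipschitz there; `ψₙ` stays bounded because `ψₙ(wₙ) → 0`.
Arzelà–Ascoli applied to the pairs `(ψₙ, ψₙ')` gives a subsequence along which both converge
uniformly, and the limit of the derivatives is the derivative of the limit.
-/

theorem LipschitzWith.abs_sub_le_of_ae_abs_deriv_le {f : ℝ → ℝ} {L : ℝ≥0}
    (hf : LipschitzWith L f) {C a b : ℝ} (h : ∀ᵐ x, x ∈ Ι a b → |deriv f x| ≤ C) :
    |f b - f a| ≤ C * |b - a| := by
  rw [← hf.lipschitzOnWith.absolutelyContinuousOnInterval.integral_deriv_eq_sub]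
  simpa only [Real.norm_eq_abs] using intervalIntegral.norm_integral_le_of_norm_le_const_ae
    (f := deriv f) (by simpa only [Real.norm_eq_abs] using h)

theorem LipschitzWith.lipschitzOnWith_of_ae_abs_deriv_le {f : ℝ → ℝ} {L : ℝ≥0}
    (hf : LipschitzWith L f) {s : Set ℝ} (hs : s.OrdConnected) {C : ℝ≥0}
    (h : ∀ᵐ x, x ∈ s → |deriv f x| ≤ C) : LipschitzOnWith C f s :=
  LipschitzOnWith.of_dist_le_mul fun x hx y hy => by
    rw [Real.dist_eq, Real.dist_eq]
    refine hf.abs_sub_le_of_ae_abs_deriv_le ?_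
    filter_upwards [h] with t ht hty using ht (hs.uIcc_subset hy hx (uIoc_subset_uIcc hty))

theorem LipschitzWith.abs_lt_one_of_ae_abs_deriv_le_comp {u : ℝ → ℝ} {L : ℝ≥0}
    (hu : LipschitzWith L u) {G : ℝ → ℝ} {M : ℝ≥0} (hGM : ∀ v, |v| ≤ 1 → G v ≤ M)
    (huG : ∀ᵐ x, |deriv u x| ≤ G (u x)) {x₀ x : ℝ} (hx₀ : |u x₀| < 1 / 2)
    (hx : M * |x - x₀| ≤ 1 / 2) : |u x| < 1 := by
  by_contra! hx1
  have hA : IsCompact (uIcc x₀ x ∩ {y | 1 ≤ |u y|}) :=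
    isCompact_uIcc.inter_right (isClosed_le continuous_const hu.continuous.abs)
  obtain ⟨y₀, ⟨hy₀x, hy₀1 : 1 ≤ |u y₀|⟩, hy₀min⟩ := hA.exists_isMinOn ⟨x, right_mem_uIcc, hx1⟩
    (f := fun y => |y - x₀|) (continuous_id.sub continuous_const).abs.continuousOn
  have hbefore : ∀ y ∈ Ι x₀ y₀, y ≠ y₀ → |u y| < 1 := by
    intro y hy hne
    by_contra! hy1
    have hcloser : |y - x₀| < |y₀ - x₀| := by
      rcases le_total x₀ y₀ with h | h
      · rw [uIoc_of_le h] at hy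
        rw [abs_of_pos (by linarith [hy.1]), abs_of_nonneg (by linarith)]
        linarith [lt_of_le_of_ne hy.2 hne]
      · rw [uIoc_of_ge h] at hy
        rw [abs_of_nonpos (by linarith [hy.2]), abs_of_nonpos (by linarith)]
        linarith [hy.1]
    exact (hy₀min ⟨uIcc_subset_uIcc_left hy₀x (uIoc_subset_uIcc hy), hy1⟩).not_gt hcloser
  have hslope : |u y₀ - u x₀| ≤ M * |y₀ - x₀| := hu.abs_sub_le_of_ae_abs_deriv_le <| by
    filter_upwards [huG, volume.ae_ne y₀] with y hy hne hmem
    exact hy.trans (hGM _ (hbefore y hmem hne).le)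
  have := mul_le_mul_of_nonneg_left (abs_sub_left_of_mem_uIcc hy₀x) M.coe_nonneg
  have := abs_sub_abs_le_abs_sub (u y₀) (u x₀)
  linarith

theorem exists_strictMono_tendstoUniformlyOn_of_lipschitzOnWith {X E : Type*}
    [PseudoMetricSpace X] [MetricSpace E] {K : Set X} (hK : IsCompact K) {Q : Set E}
    (hQ : IsCompact Q) {L : ℝ≥0} {f : ℕ → X → E}
    (hf : ∀ᶠ n in atTop, LipschitzOnWith L (f n) K ∧ MapsTo (f n) K Q) :
    ∃ (φ : ℕ → ℕ) (g : X → E), StrictMono φ ∧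
      TendstoUniformlyOn (fun k => f (φ k)) g atTop K ∧ LipschitzOnWith L g K := by
  obtain ⟨N, hN⟩ := eventually_atTop.1 hf
  have : CompactSpace K := isCompact_iff_compactSpace.1 hK
  set S : Set C(K, E) := {F | LipschitzWith L F ∧ ∀ x, F x ∈ Q}
  have hS : IsCompact S := by
    refine ArzelaAscoli.isCompact_of_equicontinuous S ?_
      (LipschitzWith.uniformEquicontinuous _ L fun F => F.2.1).equicontinuous
    have himage :
        ContinuousMap.toFun '' S = {g : K → E | LipschitzWith L g} ∩ univ.pi fun _ => Q := by
      ext g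
      refine ⟨?_, fun hg => ⟨⟨g, hg.1.continuous⟩, ⟨hg.1, fun x => hg.2 x trivial⟩, rfl⟩⟩
      rintro ⟨F, hF, rfl⟩
      exact ⟨hF.1, fun x _ => hF.2 x⟩
    rw [himage]
    exact (isCompact_univ_pi fun _ => hQ).inter_left (isClosed_setOfPred_lipschitzWith L)
  let F : ℕ → C(K, E) := fun n =>
    ⟨K.domRestrict (f (n + N)), (hN (n + N) le_add_self).1.continuousOn.domRestrict⟩
  have hFS : ∀ n, F n ∈ S := fun n =>
    ⟨(hN (n + N) le_add_self).1.to_restrict, fun x => (hN (n + N) le_add_self).2 x.2⟩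
  obtain ⟨g, hgS, φ, hφ, hlim⟩ := hS.isSeqCompact hFS
  classical
  -- off `K` any values will do; `f 0` avoids assuming `E` nonempty
  let g' : X → E := fun x => if hx : x ∈ K then g ⟨x, hx⟩ else f 0 x
  have hg' : K.domRestrict g' = g := funext fun x => dif_pos x.2
  refine ⟨fun k => φ k + N, g', fun a b hab => Nat.add_lt_add_right (hφ hab) N, ?_, ?_⟩
  · rw [tendstoUniformlyOn_iff_tendstoUniformly_comp_coe]
    have hlim' := ContinuousMap.tendsto_iff_tendstoUniformly.1 hlim
    rw [← hg'] at hlim'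
    exact hlim'
  · rw [lipschitzOnWith_iff_restrict, hg']
    exact hgS.1

theorem contDiffOn_one_and_lipschitzOnWith_deriv_of_tendstoUniformlyOn {ι : Type*}
    {l : Filter ι} [l.NeBot] {f f' : ι → ℝ → ℝ} {g g' : ℝ → ℝ} {s : Set ℝ} {L : ℝ≥0}
    (hs : IsOpen s) (hf : ∀ n, ∀ x ∈ s, HasDerivAt (f n) (f' n x) x)
    (hfg : ∀ x ∈ s, Tendsto (fun n => f n x) l (𝓝 (g x)))
    (hfg' : TendstoUniformlyOn f' g' l s) (hg' : LipschitzOnWith L g' s) :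
    ContDiffOn ℝ 1 g s ∧ LipschitzOnWith L (deriv g) s := by
  have hg : ∀ x ∈ s, HasDerivAt g (g' x) x := fun x hx =>
    hasDerivAt_of_tendstoUniformlyOn hs hfg' (Eventually.of_forall hf) hfg hx
  have hderiv : EqOn (deriv g) g' s := fun x hx => (hg x hx).deriv
  refine ⟨(contDiffOn_one_iff_derivWithin hs.uniqueDiffOn).2
    ⟨fun x hx => (hg x hx).differentiableAt.differentiableWithinAt, ?_⟩, ?_⟩
  · exact hg'.continuousOn.congr fun x hx => (derivWithin_of_isOpen hs hx).trans (hderiv hx)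
  · exact LipschitzOnWith.of_dist_le_mul fun x hx y hy => by
      rw [hderiv hx, hderiv hy]
      exact hg'.dist_le_mul x hx y hy

theorem eventually_front_bounds {G : ℝ → ℝ} (hG : Continuous G) {ψ : ℕ → ℝ → ℝ}
    (hC1 : ∀ n, ContDiff ℝ 1 (ψ n)) (hlip : ∀ n, ∃ L : ℝ≥0, LipschitzWith L (deriv (ψ n)))
    (hG2 : ∀ n, ∀ᵐ y : ℝ, |deriv (deriv (ψ n)) y| ≤ G (deriv (ψ n) y))
    {ybar : ℝ} {w wt : ℕ → ℝ} (hw : Tendsto w atTop (𝓝 ybar))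
    (hwt : Tendsto wt atTop (𝓝 ybar)) (hψw : Tendsto (fun n => ψ n (w n)) atTop (𝓝 0))
    (hψwt : Tendsto (fun n => deriv (ψ n) (wt n)) atTop (𝓝 0)) :
    ∃ δ > 0, ∃ M : ℝ≥0, ∀ᶠ n in atTop,
      (∀ y ∈ closedBall ybar δ, |ψ n y| ≤ 2 ∧ |deriv (ψ n) y| ≤ 1) ∧
      (∀ᵐ y, y ∈ closedBall ybar δ → |deriv (deriv (ψ n)) y| ≤ M) ∧
      LipschitzOnWith 1 (ψ n) (closedBall ybar δ) ∧
      LipschitzOnWith M (deriv (ψ n)) (closedBall ybar δ) := by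
  obtain ⟨M, hGM⟩ : ∃ M : ℝ≥0, ∀ v, |v| ≤ 1 → G v ≤ M := by
    obtain ⟨M, hM⟩ := (isCompact_Icc (a := -1) (b := 1)).bddAbove_image hG.continuousOn
    exact ⟨M.toNNReal, fun v hv => (hM ⟨v, abs_le.1 hv, rfl⟩).trans (Real.le_coe_toNNReal M)⟩
  set δ : ℝ := (4 * (M + 1))⁻¹
  have hδ : 0 < δ := by positivity
  have hδM : 4 * (M + 1) * δ = 1 := mul_inv_cancel₀ (by positivity)
  have hMδ : M * (2 * δ) ≤ 1 / 2 := by nlinarith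
  have hδ1 : 2 * δ ≤ 1 := by nlinarith [M.coe_nonneg]
  refine ⟨δ, hδ, M, ?_⟩
  filter_upwards [hw.eventually (closedBall_mem_nhds ybar hδ),
    hwt.eventually (closedBall_mem_nhds ybar hδ),
    hψw.eventually (closedBall_mem_nhds 0 one_pos),
    hψwt.eventually (ball_mem_nhds 0 one_half_pos)] with n (hwn : dist (w n) ybar ≤ δ)
    (hwtn : dist (wt n) ybar ≤ δ) hψn hψ'n
  obtain ⟨L, hL⟩ := hlip n
  have hD : ∀ y ∈ closedBall ybar δ, |deriv (ψ n) y| ≤ 1 := fun y (hy : dist y ybar ≤ δ) => by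
    refine (hL.abs_lt_one_of_ae_abs_deriv_le_comp hGM (hG2 n) (by simpa using hψ'n) ?_).le
    rw [← Real.dist_eq]
    exact (mul_le_mul_of_nonneg_left ((dist_triangle_right _ _ ybar).trans (by linarith))
      M.coe_nonneg).trans hMδ
  have hD2 : ∀ᵐ y, y ∈ closedBall ybar δ → |deriv (deriv (ψ n)) y| ≤ M := by
    filter_upwards [hG2 n] with y hy hyK using hy.trans (hGM _ (hD y hyK))
  have hlip1 : LipschitzOnWith 1 (ψ n) (closedBall ybar δ) :=
    (convex_closedBall ybar δ).lipschitzOnWith_of_nnnorm_deriv_le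
      (fun y _ => (hC1 n).differentiable one_ne_zero y) fun y hy => by
        simpa [← NNReal.coe_le_coe] using hD y hy
  refine ⟨fun y hy => ⟨?_, hD y hy⟩, hD2, hlip1,
    hL.lipschitzOnWith_of_ae_abs_deriv_le (convex_closedBall ybar δ).ordConnected hD2⟩
  have hψy := hlip1.dist_le_mul y hy (w n) hwn
  have hyw : dist y (w n) ≤ 2 * δ :=
    (dist_triangle_right _ _ ybar).trans (by linarith [mem_closedBall.1 hy])
  have := abs_sub_abs_le_abs_sub (ψ n y) (ψ n (w n))
  rw [Real.dist_eq] at hψy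
  simp only [dist_zero_right, Real.norm_eq_abs] at hψn
  push_cast at hψy
  linarith

theorem fronts_locally_bounded_W2inf_general
    (G : ℝ → ℝ) (hG : Continuous G)
    (ψ : ℕ → ℝ → ℝ)
    (hC1 : ∀ n, ContDiff ℝ 1 (ψ n))
    (hlip : ∀ n, ∃ L : ℝ≥0, LipschitzWith L (deriv (ψ n)))
    (hG2 : ∀ n, ∀ᵐ y : ℝ, |deriv (deriv (ψ n)) y| ≤ G (deriv (ψ n) y))
    (ybar : ℝ) (w wt : ℕ → ℝ)
    (hw : Tendsto w atTop (nhds ybar)) (hwt : Tendsto wt atTop (nhds ybar))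
    (hψw : Tendsto (fun n => ψ n (w n)) atTop (nhds 0))
    (hψwt : Tendsto (fun n => deriv (ψ n) (wt n)) atTop (nhds 0)) :
    ∃ ε₀ > 0, ∃ C ≥ (0 : ℝ), ∃ N : ℕ,
      (∀ n ≥ N, ∀ y ∈ Metric.ball ybar ε₀, |ψ n y| ≤ C ∧ |deriv (ψ n) y| ≤ C) ∧
      (∀ n ≥ N, ∀ᵐ y : ℝ, y ∈ Metric.ball ybar ε₀ → |deriv (deriv (ψ n)) y| ≤ C) ∧
      ∃ (φ : ℕ → ℕ) (ψbar : ℝ → ℝ) (L : ℝ≥0), StrictMono φ ∧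
        TendstoUniformlyOn (fun p => ψ (φ p)) ψbar atTop (Metric.ball ybar ε₀) ∧
        ContDiffOn ℝ 1 ψbar (Metric.ball ybar ε₀) ∧
        LipschitzOnWith L (deriv ψbar) (Metric.ball ybar ε₀) := by
  obtain ⟨δ, hδ, M, hbounds⟩ := eventually_front_bounds hG hC1 hlip hG2 hw hwt hψw hψwt
  obtain ⟨N, hN⟩ := eventually_atTop.1 hbounds
  have hball : ball ybar δ ⊆ closedBall ybar δ := ball_subset_closedBall
  obtain ⟨φ, F, hφ, hFlim, hFlip⟩ := exists_strictMono_tendstoUniformlyOn_of_lipschitzOnWith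
    (isCompact_closedBall ybar δ) (isCompact_closedBall (0 : ℝ × ℝ) 2)
    (f := fun n y => (ψ n y, deriv (ψ n) y)) <| hbounds.mono fun n ⟨hD, _, hlip1, hlipM⟩ =>
      ⟨hlip1.prodMk hlipM, fun y hy => by
        simpa [Prod.norm_def] using ⟨(hD y hy).1, (hD y hy).2.trans one_le_two⟩⟩
  have hlim := (uniformContinuous_fst.comp_tendstoUniformlyOn hFlim).mono hball
  obtain ⟨hC1bar, hLbar⟩ := contDiffOn_one_and_lipschitzOnWith_deriv_of_tendstoUniformlyOn
    isOpen_ball (fun k y _ => ((hC1 (φ k)).differentiable one_ne_zero y).hasDerivAt)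
    (fun y hy => hlim.tendsto_at hy)
    ((uniformContinuous_snd.comp_tendstoUniformlyOn hFlim).mono hball)
    ((LipschitzWith.prod_snd.comp_lipschitzOnWith hFlip).mono hball)
  refine ⟨δ, hδ, max M 2, by positivity, N, fun n hn y hy => ?_, fun n hn => ?_,
    φ, _, _, hφ, hlim, hC1bar, hLbar⟩
  · obtain ⟨hψ, hψ'⟩ := (hN n hn).1 y (hball hy)
    exact ⟨hψ.trans (le_max_right _ _), hψ'.trans (one_le_two.trans (le_max_right _ _))⟩
  · filter_upwards [(hN n hn).2.1] with y hy hyK using (hy (hball hyK)).trans (le_max_left _ _)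

/-- **Local `W^{2,∞}` compactness of the fronts.** Let `G` be continuous and let
`ψₙ : 𝕋 → ℝ` (1-periodic `C¹` functions on `ℝ` with Lipschitz derivative) satisfy
`|ψₙ''| ≤ G(ψₙ')` a.e. If `wₙ → ȳ`, `w̃ₙ → ȳ`, `ψₙ(wₙ) → 0` and `ψₙ'(w̃ₙ) → 0`, then
there exist `ε₀ > 0`, `C ≥ 0` and `N` such that for `n ≥ N`: `|ψₙ| ≤ C`, `|ψₙ'| ≤ C` on
`B(ȳ, ε₀)` and `|ψₙ''| ≤ C` a.e. on `B(ȳ, ε₀)`; moreover a subsequence of `(ψₙ)`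
converges uniformly on `B(ȳ, ε₀)` to some `ψ̄` which is `C¹` with Lipschitz derivative
there. -/
theorem fronts_locally_bounded_W2inf
    (G : ℝ → ℝ) (hG : Continuous G)
    (ψ : ℕ → ℝ → ℝ)
    (hper : ∀ n, Function.Periodic (ψ n) 1)
    (hC1 : ∀ n, ContDiff ℝ 1 (ψ n))
    (hlip : ∀ n, ∃ L : ℝ≥0, LipschitzWith L (deriv (ψ n)))
    (hG2 : ∀ n, ∀ᵐ y : ℝ, |deriv (deriv (ψ n)) y| ≤ G (deriv (ψ n) y))
    (ybar : ℝ) (w wt : ℕ → ℝ)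
    (hw : Tendsto w atTop (nhds ybar)) (hwt : Tendsto wt atTop (nhds ybar))
    (hψw : Tendsto (fun n => ψ n (w n)) atTop (nhds 0))
    (hψwt : Tendsto (fun n => deriv (ψ n) (wt n)) atTop (nhds 0)) :
    ∃ ε₀ > 0, ∃ C ≥ (0 : ℝ), ∃ N : ℕ,
      (∀ n ≥ N, ∀ y ∈ Metric.ball ybar ε₀, |ψ n y| ≤ C ∧ |deriv (ψ n) y| ≤ C) ∧
      (∀ n ≥ N, ∀ᵐ y : ℝ, y ∈ Metric.ball ybar ε₀ → |deriv (deriv (ψ n)) y| ≤ C) ∧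
      ∃ (φ : ℕ → ℕ) (ψbar : ℝ → ℝ) (L : ℝ≥0), StrictMono φ ∧
        TendstoUniformlyOn (fun p => ψ (φ p)) ψbar atTop (Metric.ball ybar ε₀) ∧
        ContDiffOn ℝ 1 ψbar (Metric.ball ybar ε₀) ∧
        LipschitzOnWith L (deriv ψbar) (Metric.ball ybar ε₀) :=
  fronts_locally_bounded_W2inf_general G hG ψ hC1 hlip hG2 ybar w wt hw hwt hψw hψwt
end
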